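/- Let L : M_d → M_d be the generator of a quantum dynamical semigroup of unital channels, and let P := span{X ∈ M_d : L(X) = iaX for some a ∈ ℝ}. Then P is a *-subalgebra of M_d: if X, Y ∈ P then XY ∈ P, and if X ∈ P then X* ∈ P. -/

import Mathlib

noncomputable section
open scoped Kronecker
open Filter Topology Matrix

/-- `M_d`, the algebra of `d × d` complex matrices. -/
abbrev Md (d : ℕ) := Matrix (Fin d) (Fin d) ℂ

/-- `Ad_U : X ↦ U* X U` for a unitary `U`. -/
def adU {d : ℕ} (U : Matrix.unitaryGroup (Fin d) ℂ) : Md d →ₗ[ℂ] Md d where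
  toFun X := (U : Md d)ᴴ * X * (U : Md d)
  map_add' X Y := by simp [Matrix.mul_add, Matrix.add_mul]
  map_smul' c X := by simp [Matrix.mul_smul, Matrix.smul_mul]

/-- A linear map is completely positive if it has a Kraus decomposition. -/
def IsCP {d : ℕ} (Φ : Md d →ₗ[ℂ] Md d) : Prop :=
  ∃ (n : ℕ) (V : Fin n → Md d), ∀ X, Φ X = ∑ j, (V j)ᴴ * X * (V j)

def IsUnital {d : ℕ} (Φ : Md d →ₗ[ℂ] Md d) : Prop := Φ 1 = 1

def IsTracePreserving {d : ℕ} (Φ : Md d →ₗ[ℂ] Md d) : Prop :=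
  ∀ X, (Φ X).trace = X.trace

def IsHermitianPreserving {d : ℕ} (Φ : Md d →ₗ[ℂ] Md d) : Prop :=
  ∀ X, Φ Xᴴ = (Φ X)ᴴ

/-- A unital quantum channel: CP, unital and trace-preserving. -/
def IsUnitalChannel {d : ℕ} (Φ : Md d →ₗ[ℂ] Md d) : Prop :=
  IsCP Φ ∧ IsUnital Φ ∧ IsTracePreserving Φ

/-- A mixed unitary channel: a convex combination of unitary conjugations. -/
def IsMixedUnitary {d : ℕ} (Φ : Md d →ₗ[ℂ] Md d) : Prop :=
  ∃ (ℓ : ℕ) (U : Fin ℓ → Matrix.unitaryGroup (Fin d) ℂ) (lam : Fin ℓ → ℝ),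
    (∀ j, 0 ≤ lam j) ∧ (∀ j, lam j ≤ 1) ∧ (∑ j, lam j = 1) ∧
    Φ = ∑ j, (lam j : ℂ) • adU (U j)

/-- The Choi matrix `J(Φ) = (1/d) ∑_{i,j} E_{ij} ⊗ Φ(E_{ij})`. -/
def choi {d : ℕ} (Φ : Md d →ₗ[ℂ] Md d) : Matrix (Fin d × Fin d) (Fin d × Fin d) ℂ :=
  (d : ℂ)⁻¹ • ∑ i : Fin d, ∑ j : Fin d,
    (Matrix.single i j (1 : ℂ)) ⊗ₖ Φ (Matrix.single i j (1 : ℂ))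

/-- `⟨Φ, Ψ⟩ = tr(J(Φ)* J(Ψ))`; this is a real number whenever `Φ, Ψ` are
Hermitian-preserving, so we record its real part. -/
def pairRe {d : ℕ} (Φ Ψ : Md d →ₗ[ℂ] Md d) : ℝ := (((choi Φ)ᴴ * choi Ψ).trace).re

/-- The Hilbert–Schmidt (Choi) norm `‖Φ‖₂ = tr(J(Φ)* J(Φ))^{1/2}`. -/
def hsNorm {d : ℕ} (Φ : Md d →ₗ[ℂ] Md d) : ℝ := Real.sqrt (pairRe Φ Φ)

attribute [local instance] Matrix.normedAddCommGroup Matrix.normedSpace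

/-- The exponential `e^{tL}` of a linear map `L` on `M_d`. -/
def expL {d : ℕ} (L : Md d →ₗ[ℂ] Md d) (t : ℝ) : Md d →ₗ[ℂ] Md d :=
  haveI : IsTopologicalRing (Md d →L[ℂ] Md d) :=
    @NonUnitalSeminormedRing.toIsTopologicalRing _ ContinuousLinearMap.toNormedRing.toNonUnitalNormedRing.toNonUnitalSeminormedRing
  ((NormedSpace.exp ((t : ℂ) • (LinearMap.toContinuousLinearMap L)) :
      Md d →L[ℂ] Md d)).toLinearMap

/-- `P = span{X : L X = i a X for some real a}`. -/
def periphGen {d : ℕ} (L : Md d →ₗ[ℂ] Md d) : Submodule ℂ (Md d) :=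
  Submodule.span ℂ {X : Md d | ∃ a : ℝ, L X = ((a : ℂ) * Complex.I) • X}

/-!
Let `X`, `Y` be eigenvectors of `L` with eigenvalues `ia`, `ib`. Each `Φ = e^{tL}`, `t ≥ 0`, is a
unital channel with `Φ X = e^{iat} X`, a unimodular multiple. For a unital Kraus map the
Kadison–Schwarz defect `Φ(X*X) - Φ(X)*Φ(X)` is the sum of squares `∑ (X V_j - V_j Φ X)*(⋯)`, and
for a unimodular eigenvector of a trace-preserving map its trace vanishes; hence every Kraus
operator intertwines `X` and `Φ X`, and `Φ(XY) = Φ(X) Φ(Y) = e^{i(a+b)t} XY`. Differentiating at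
`t = 0` gives `L(XY) = i(a+b) XY`. Likewise `Φ(X*) = Φ(X)*` gives `L(X*) = -ia X*`.
-/

open scoped Nat Pointwise

/- Instance search does not find these through the local matrix norm. -/
instance instNormedRingCLMMd {d : ℕ} : NormedRing (Md d →L[ℂ] Md d) :=
  ContinuousLinearMap.toNormedRing

instance {d : ℕ} : NormedAlgebra ℂ (Md d →L[ℂ] Md d) := ContinuousLinearMap.toNormedAlgebra

instance {d : ℕ} :
    @CompleteSpace (Md d →L[ℂ] Md d) instNormedRingCLMMd.toPseudoMetricSpace.toUniformSpace :=
  haveI : SequentialSpace (Md d) := inferInstanceAs (SequentialSpace (Fin d → Fin d → ℂ))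
  ContinuousLinearMap.instCompleteSpace

instance {d : ℕ} : IsTopologicalRing (Md d →L[ℂ] Md d) :=
  NonUnitalSeminormedRing.toIsTopologicalRing

theorem Matrix.eq_zero_of_trace_sum_conjTranspose_mul_self_eq_zero {m n ι R : Type*}
    [Fintype m] [Fintype n] [PartialOrder R] [NonUnitalRing R] [StarRing R] [StarOrderedRing R]
    [NoZeroDivisors R] {B : ι → Matrix m n R} {s : Finset ι}
    (h : (∑ j ∈ s, (B j)ᴴ * B j).trace = 0) {j : ι} (hj : j ∈ s) : B j = 0 := by
  have hnonneg : ∀ i ∈ s, 0 ≤ ((B i)ᴴ * B i).trace := fun i _ => by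
    rw [← Matrix.star_vec_dotProduct_vec]
    exact dotProduct_star_self_nonneg _
  rw [Matrix.trace_sum, Finset.sum_eq_zero_iff_of_nonneg hnonneg] at h
  exact Matrix.trace_conjTranspose_mul_self_eq_zero_iff.mp (h j hj)

theorem Complex.star_exp_ofReal_mul_I (x : ℝ) :
    star (Complex.exp (x * Complex.I)) = Complex.exp ((-x : ℝ) * Complex.I) := by
  change (starRingEnd ℂ) _ = _
  rw [← Complex.exp_conj]
  simp

section Kraus

variable {d n : ℕ} {Φ : Md d →ₗ[ℂ] Md d} {V : Fin n → Md d}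

theorem IsCP.map_conjTranspose (hΦ : IsCP Φ) (X : Md d) : Φ Xᴴ = (Φ X)ᴴ := by
  obtain ⟨n, V, hV⟩ := hΦ
  simp only [hV, Matrix.conjTranspose_sum, Matrix.conjTranspose_mul,
    Matrix.conjTranspose_conjTranspose, Matrix.mul_assoc]

theorem map_conjTranspose_mul_self_sub_eq_sum (hV : ∀ X, Φ X = ∑ j, (V j)ᴴ * X * V j)
    (hunit : Φ 1 = 1) (X : Md d) :
    Φ (Xᴴ * X) - (Φ X)ᴴ * Φ X = ∑ j, (X * V j - V j * Φ X)ᴴ * (X * V j - V j * Φ X) := by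
  have hΦ : IsCP Φ := ⟨n, V, hV⟩
  have hsum : ∑ j, (V j)ᴴ * V j = 1 := by simpa [hV] using hunit
  symm
  calc ∑ j, (X * V j - V j * Φ X)ᴴ * (X * V j - V j * Φ X)
      = ∑ j, ((V j)ᴴ * (Xᴴ * X) * V j - (V j)ᴴ * Xᴴ * V j * Φ X
          - (Φ X)ᴴ * ((V j)ᴴ * X * V j) + (Φ X)ᴴ * ((V j)ᴴ * V j) * Φ X) := by
        refine Finset.sum_congr rfl fun j _ => ?_
        simp only [Matrix.conjTranspose_sub, Matrix.conjTranspose_mul, Matrix.sub_mul,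
          Matrix.mul_sub, Matrix.mul_assoc]
        abel
    _ = Φ (Xᴴ * X) - Φ Xᴴ * Φ X - (Φ X)ᴴ * Φ X + (Φ X)ᴴ * Φ X := by
        simp only [Finset.sum_add_distrib, Finset.sum_sub_distrib, ← Finset.sum_mul,
          ← Finset.mul_sum, hsum, hV, Matrix.mul_one]
    _ = Φ (Xᴴ * X) - (Φ X)ᴴ * Φ X := by rw [hΦ.map_conjTranspose]; abel

open scoped ComplexOrder in
/-- Equality in the Kadison–Schwarz inequality, detected by the trace, puts `X` in the right
multiplicative domain of `Φ`. -/
theorem map_mul_of_trace_map_conjTranspose_mul_self_eq (hV : ∀ X, Φ X = ∑ j, (V j)ᴴ * X * V j)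
    (hunit : Φ 1 = 1) {X : Md d} (htr : (Φ (Xᴴ * X)).trace = ((Φ X)ᴴ * Φ X).trace) (Y : Md d) :
    Φ (Y * X) = Φ Y * Φ X := by
  rw [← sub_eq_zero, ← Matrix.trace_sub, map_conjTranspose_mul_self_sub_eq_sum hV hunit] at htr
  have hcomm : ∀ j, X * V j = V j * Φ X := fun j => sub_eq_zero.mp
    (Matrix.eq_zero_of_trace_sum_conjTranspose_mul_self_eq_zero htr (Finset.mem_univ j))
  calc Φ (Y * X) = ∑ j, (V j)ᴴ * Y * (X * V j) := by simp only [hV (Y * X), Matrix.mul_assoc]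
    _ = ∑ j, (V j)ᴴ * Y * V j * Φ X := by simp only [hcomm, Matrix.mul_assoc]
    _ = Φ Y * Φ X := by rw [hV Y, Finset.sum_mul]

end Kraus

theorem IsUnitalChannel.map_mul_of_map_eq_smul {d : ℕ} {Φ : Md d →ₗ[ℂ] Md d}
    (hΦ : IsUnitalChannel Φ) {X : Md d} {u : ℂ} (hX : Φ X = u • X) (hu : star u * u = 1)
    (Y : Md d) : Φ (Y * X) = Φ Y * Φ X := by
  obtain ⟨⟨n, V, hV⟩, hunit, htp⟩ := hΦ
  refine map_mul_of_trace_map_conjTranspose_mul_self_eq hV hunit ?_ Y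
  rw [htp, hX, Matrix.conjTranspose_smul, Matrix.smul_mul, Matrix.mul_smul, smul_smul, hu,
    one_smul]

section Semigroup

variable {d : ℕ} {L : Md d →ₗ[ℂ] Md d}

theorem expL_apply_of_eq_smul {X : Md d} {μ : ℂ} (hX : L X = μ • X) (t : ℝ) :
    expL L t X = Complex.exp (t * μ) • X := by
  set A := LinearMap.toContinuousLinearMap L
  have hpow : ∀ n : ℕ, (((t : ℂ) • A) ^ n) X = (t * μ) ^ n • X := by
    intro n
    induction n with
    | zero => simp
    | succ n ih =>
      rw [pow_succ', mul_apply_eq_comp, ih, map_smul, _root_.smul_apply,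
        LinearMap.coe_toContinuousLinearMap', hX, smul_smul, smul_smul, pow_succ, mul_assoc]
  have hseries : HasSum (fun n : ℕ => ((n !⁻¹ : ℂ) • ((t : ℂ) • A) ^ n) X)
      (Complex.exp (t * μ) • X) := by
    simp only [_root_.smul_apply, hpow, smul_smul]
    simpa [Complex.exp_eq_exp_ℂ] using
      (NormedSpace.exp_series_hasSum_exp' (𝕂 := ℂ) ((t : ℂ) * μ)).smul_const X
  exact ((NormedSpace.exp_series_hasSum_exp' (𝕂 := ℂ) ((t : ℂ) • A)).mapL
    (ContinuousLinearMap.apply ℂ (Md d) X)).unique hseries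

theorem hasDerivAt_expL_apply_zero (L : Md d →ₗ[ℂ] Md d) (Z : Md d) :
    HasDerivAt (fun t : ℝ => expL L t Z) (L Z) 0 := by
  set A := LinearMap.toContinuousLinearMap L
  have hexp0 : NormedSpace.exp (((0 : ℝ) : ℂ) • A) = 1 := by
    rw [Complex.ofReal_zero, zero_smul ℂ A, NormedSpace.exp_zero]
  have h : HasDerivAt (fun s : ℂ => NormedSpace.exp (s • A))
      (NormedSpace.exp (((0 : ℝ) : ℂ) • A) * A) ((0 : ℝ) : ℂ) :=
    hasDerivAt_exp_smul_const A _
  rw [hexp0, one_mul] at h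
  refine (((ContinuousLinearMap.apply ℂ (Md d) Z).hasFDerivAt.comp_hasDerivAt _ h).scomp (0 : ℝ)
    Complex.ofRealCLM.hasDerivAt).congr_deriv ?_
  rw [Complex.ofRealCLM_apply, Complex.ofReal_one, one_smul]
  rfl

theorem eq_smul_of_expL_apply_eq {Z : Md d} {c : ℂ}
    (hZ : ∀ t : ℝ, 0 ≤ t → expL L t Z = Complex.exp (t * c) • Z) : L Z = c • Z := by
  have hexp : HasDerivAt (fun t : ℝ => Complex.exp (t * c) • Z) (c • Z) 0 := by
    refine ((((hasDerivAt_id ((0 : ℝ) : ℂ)).mul_const c).cexp.smul_const Z).scomp (0 : ℝ)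
      Complex.ofRealCLM.hasDerivAt).congr_deriv ?_
    simp
  refine (uniqueDiffWithinAt_Ici 0).eq_deriv _ (hasDerivAt_expL_apply_zero L Z).hasDerivWithinAt ?_
  exact hexp.hasDerivWithinAt.congr (fun t ht => hZ t ht) (hZ 0 le_rfl)

theorem expL_apply_of_eq_I_smul {X : Md d} {a : ℝ} (hX : L X = ((a : ℂ) * Complex.I) • X)
    (t : ℝ) : expL L t X = Complex.exp ((t * a : ℝ) * Complex.I) • X := by
  rw [expL_apply_of_eq_smul hX, Complex.ofReal_mul, mul_assoc]

theorem apply_mul_eq_I_smul (h : ∀ t : ℝ, 0 ≤ t → IsUnitalChannel (expL L t)) {X Y : Md d}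
    {a b : ℝ} (hX : L X = ((a : ℂ) * Complex.I) • X) (hY : L Y = ((b : ℂ) * Complex.I) • Y) :
    L (X * Y) = (((a + b : ℝ) : ℂ) * Complex.I) • (X * Y) := by
  refine eq_smul_of_expL_apply_eq fun t ht => ?_
  have hunimod : star (Complex.exp ((t * b : ℝ) * Complex.I)) *
      Complex.exp ((t * b : ℝ) * Complex.I) = 1 := by
    rw [Complex.star_exp_ofReal_mul_I, ← Complex.exp_add, Complex.ofReal_neg, neg_mul,
      neg_add_cancel, Complex.exp_zero]
  rw [(h t ht).map_mul_of_map_eq_smul (expL_apply_of_eq_I_smul hY t) hunimod,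
    expL_apply_of_eq_I_smul hX, expL_apply_of_eq_I_smul hY, smul_mul_smul_comm,
    ← Complex.exp_add]
  congr 2
  push_cast
  ring

theorem apply_conjTranspose_eq_I_smul (h : ∀ t : ℝ, 0 ≤ t → IsCP (expL L t)) {X : Md d} {a : ℝ}
    (hX : L X = ((a : ℂ) * Complex.I) • X) :
    L Xᴴ = (((-a : ℝ) : ℂ) * Complex.I) • Xᴴ := by
  refine eq_smul_of_expL_apply_eq fun t ht => ?_
  rw [(h t ht).map_conjTranspose, expL_apply_of_eq_I_smul hX, Matrix.conjTranspose_smul,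
    Complex.star_exp_ofReal_mul_I]
  congr 2
  push_cast
  ring

end Semigroup

/-- for the generator `L` of a quantum dynamical semigroup of unital
channels, the span of the purely-imaginary eigenvectors is a *-subalgebra. -/
theorem stmt_7 (d : ℕ) (L : Md d →ₗ[ℂ] Md d)
    (h : ∀ t : ℝ, 0 ≤ t → IsUnitalChannel (expL L t)) :
    (∀ X ∈ periphGen L, ∀ Y ∈ periphGen L, X * Y ∈ periphGen L) ∧
    (∀ X ∈ periphGen L, Xᴴ ∈ periphGen L) := by
  set S := {X : Md d | ∃ a : ℝ, L X = ((a : ℂ) * Complex.I) • X}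
  have hmul : S * S ⊆ S := by
    rintro _ ⟨X, ⟨a, hX⟩, Y, ⟨b, hY⟩, rfl⟩
    exact ⟨a + b, apply_mul_eq_I_smul h hX hY⟩
  have hstar : (Matrix.conjTransposeLinearEquiv (Fin d) (Fin d) ℂ ℂ) '' S ⊆ S := by
    rintro _ ⟨X, ⟨a, hX⟩, rfl⟩
    exact ⟨-a, apply_conjTranspose_eq_I_smul (fun t ht => (h t ht).1) hX⟩
  refine ⟨fun X hX Y hY => ?_, fun X hX => ?_⟩
  · have hXY := Submodule.mul_mem_mul hX hY
    rw [periphGen, Submodule.span_mul_span] at hXY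
    exact Submodule.span_mono hmul hXY
  · have hXH := Submodule.mem_map_of_mem
      (f := (Matrix.conjTransposeLinearEquiv (Fin d) (Fin d) ℂ ℂ).toLinearMap) hX
    rw [periphGen, Submodule.map_span] at hXH
    exact Submodule.span_mono hstar hXH
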